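/- arXiv:1012.1181 — 3 statements merged into one kernel-verified Lean document; each statement's English description precedes it below -/
import Mathlib

section
/- Let f be a smooth solution of the Tanno equation with constant c on a pseudo-Riemannian Kähler manifold, and let γ: ℝ → M be a complete lightlike (null) geodesic. Then the function t ↦ f(γ(t)) satisfies the ODE (f∘γ)'''(t) = 0, so f∘γ is a polynomial of degree at most 2 in t. -/
open scoped BigOperators

noncomputable section

/-- An abstract axiomatization of a pseudo-Riemannian Kähler manifold of real
dimension `2n`, given by index-notation tensor data: a metric `g`, its inverse
`ginv`, a complex structure `J` (with upper-lower indices `J^i_j`), and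
covariant-derivative operators `D0`, `D1`, `D2` (the Levi-Civita connection
acting on functions, 1-tensors and 2-tensors respectively). -/
structure KahlerSetting (n : ℕ) where
  M : Type
  topM : TopologicalSpace M
  g : M → Fin (2*n) → Fin (2*n) → ℝ
  ginv : M → Fin (2*n) → Fin (2*n) → ℝ
  J : M → Fin (2*n) → Fin (2*n) → ℝ
  D0 : (M → ℝ) → (M → Fin (2*n) → ℝ)
  D1 : (M → Fin (2*n) → ℝ) → (M → Fin (2*n) → Fin (2*n) → ℝ)
  D2 : (M → Fin (2*n) → Fin (2*n) → ℝ) → (M → Fin (2*n) → Fin (2*n) → Fin (2*n) → ℝ)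
  g_symm : ∀ x i j, g x i j = g x j i
  ginv_symm : ∀ x i j, ginv x i j = ginv x j i
  ginv_g : ∀ x i j, (∑ k, ginv x i k * g x k j) = if i = j then (1:ℝ) else 0
  J_sq : ∀ x i j, (∑ k, J x i k * J x k j) = if i = j then (-1:ℝ) else 0
  J_herm : ∀ x i j, (∑ k, ∑ l, g x k l * J x k i * J x l j) = g x i j
  D0_add : ∀ f h x i, D0 (fun y => f y + h y) x i = D0 f x i + D0 h x i
  D0_smul : ∀ (c : ℝ) f x i, D0 (fun y => c * f y) x i = c * D0 f x i
  D0_const : ∀ (c : ℝ) x i, D0 (fun _ => c) x i = 0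
  Dg_zero : ∀ x i j k, D2 g x i j k = 0
  DKform_zero : ∀ x i j k, D2 (fun y a b => ∑ c, g y a c * J y c b) x i j k = 0
  Hess_symm : ∀ f x i j, D1 (D0 f) x i j = D1 (D0 f) x j i

namespace KahlerSetting

variable {n : ℕ} (S : KahlerSetting n)

instance : TopologicalSpace S.M := S.topM

/-- The Kähler 2-form `J_{ij} = g_{iα} J^α_j`. -/
def Jl (x : S.M) (i j : Fin (2*n)) : ℝ := ∑ c, S.g x i c * S.J x c j

/-- `f̄_i = J^α_i f_{,α}`. -/
def fbar (f : S.M → ℝ) (x : S.M) (i : Fin (2*n)) : ℝ := ∑ a, S.J x a i * S.D0 f x a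

/-- The Hessian `f_{,ij}`. -/
def Hess (f : S.M → ℝ) : S.M → Fin (2*n) → Fin (2*n) → ℝ := S.D1 (S.D0 f)

/-- The third covariant derivative `f_{,ijk}`. -/
def T3 (f : S.M → ℝ) : S.M → Fin (2*n) → Fin (2*n) → Fin (2*n) → ℝ :=
  S.D2 (S.D1 (S.D0 f))

/-- The Tanno equation
`f_{,ijk} + c (2 f_{,k} g_{ij} + f_{,i} g_{jk} + f_{,j} g_{ik} - f̄_{,i} J_{jk} - f̄_{,j} J_{ik}) = 0`. -/
def IsTannoSol (c : ℝ) (f : S.M → ℝ) : Prop :=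
  ∀ x i j k,
    S.T3 f x i j k + c * (2 * S.D0 f x k * S.g x i j + S.D0 f x i * S.g x j k
      + S.D0 f x j * S.g x i k - S.fbar f x i * S.Jl x j k - S.fbar f x j * S.Jl x i k) = 0

/-- Raising an index with `g^{ij}`. -/
def raise1 (x : S.M) (ω : Fin (2*n) → ℝ) (i : Fin (2*n)) : ℝ := ∑ a, S.ginv x i a * ω a

/-- `a_{ij} := -f_{,ij} - 2 f g_{ij}`. -/
def aT (f : S.M → ℝ) (x : S.M) (i j : Fin (2*n)) : ℝ :=
  -(S.Hess f x i j) - 2 * f x * S.g x i j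

/-- `a^i_j = g^{iα} a_{αj}`. -/
def aUp (f : S.M → ℝ) (x : S.M) (i j : Fin (2*n)) : ℝ := ∑ a, S.ginv x i a * S.aT f x a j

/-- `μ := -2 f`. -/
def muF (f : S.M → ℝ) (x : S.M) : ℝ := -2 * f x

/-- The linear Frobenius-type system
`a_{ij,k} = f_i g_{jk} + f_j g_{ik} - f̄_i J_{jk} - f̄_j J_{ik}`,
`f_{i,j} = μ g_{ij} - a_{ij}`, `μ_{,i} = -2 f_i`. -/
def IsFrobSol (a : S.M → Fin (2*n) → Fin (2*n) → ℝ) (fi : S.M → Fin (2*n) → ℝ)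
    (μ : S.M → ℝ) : Prop :=
  (∀ x i j k, S.D2 a x i j k = fi x i * S.g x j k + fi x j * S.g x i k
      - (∑ c, S.J x c i * fi x c) * S.Jl x j k - (∑ c, S.J x c j * fi x c) * S.Jl x i k)
  ∧ (∀ x i j, S.D1 fi x i j = μ x * S.g x i j - a x i j)
  ∧ (∀ x i, S.D0 μ x i = -2 * fi x i)

/-- The product `F*H := -2 F H - (1/2) F_{,α} H^{,α}`. -/
def starProd (F H : S.M → ℝ) (x : S.M) : ℝ :=
  -2 * F x * H x - (1/2) * ∑ i, ∑ j, S.ginv x i j * S.D0 F x i * S.D0 H x j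

/-- The `k`-fold `*`-power of `f`; `f^{*0}` is the constant `-1/2`
(corresponding to the identity matrix `L(-1/2) = 1`). -/
def starPow (f : S.M → ℝ) : ℕ → S.M → ℝ
  | 0 => fun _ => -(1/2)
  | (k+1) => S.starProd f (starPow f k)

/-- The extended `(2n+2)×(2n+2)` matrix `L(f)` with blocks `(μ·Id₂, f_j/f̄_j ; f^i/f̄^i, a^i_j)`. -/
def Lmat (f : S.M → ℝ) (x : S.M) :
    Matrix (Fin 2 ⊕ Fin (2*n)) (Fin 2 ⊕ Fin (2*n)) ℝ :=
  Matrix.fromBlocks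
    (Matrix.of fun i j => if i = j then S.muF f x else 0)
    (Matrix.of fun i j => if i = (0 : Fin 2) then S.D0 f x j else S.fbar f x j)
    (Matrix.of fun i j => if j = (0 : Fin 2) then S.raise1 x (S.D0 f x) i
      else S.raise1 x (S.fbar f x) i)
    (Matrix.of fun i j => S.aUp f x i j)

/-- The extended manifold `M̂ = ℝ² × M`. -/
abbrev Mhat : Type := (ℝ × ℝ) × S.M

/-- `L(f)` as a field on `M̂` (its entries do not depend on the `ℝ²` coordinates). -/
def Lhat (f : S.M → ℝ) (p : S.Mhat) :
    Matrix (Fin 2 ⊕ Fin (2*n)) (Fin 2 ⊕ Fin (2*n)) ℝ :=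
  S.Lmat f p.2

/-- `a^i_j` at a point, as an endomorphism of `T_pM ≅ ℝ^{2n}`. -/
def aEnd (f : S.M → ℝ) (p : S.M) : Module.End ℝ (Fin (2*n) → ℝ) :=
  Matrix.toLin' (Matrix.of fun i j => S.aUp f p i j)

/-- `L(f)` at a point, as an endomorphism of `T_{(0,0,p)}M̂ ≅ ℝ^{2n+2}`. -/
def LEnd (f : S.M → ℝ) (p : S.M) : Module.End ℝ ((Fin 2 ⊕ Fin (2*n)) → ℝ) :=
  Matrix.toLin' (S.Lmat f p)

end KahlerSetting

/-- The embedding `T_pM ↪ T_{(0,0,p)}M̂` as vectors with vanishing `ℝ²`-components. -/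
def tangentEmb (n : ℕ) : (Fin (2*n) → ℝ) →ₗ[ℝ] ((Fin 2 ⊕ Fin (2*n)) → ℝ) where
  toFun v := Sum.elim (fun _ => 0) v
  map_add' u v := by funext i; cases i <;> simp
  map_smul' c v := by funext i; cases i <;> simp

/-! Contracting the Tanno equation with `γ' ⊗ γ' ⊗ γ'` kills every term of the bracket: the
`g`-terms because `γ'` is null, the `J`-terms because `J_{ij}` is antisymmetric (from `Jᵀ g J = g`
and `J² = -1`). Hence `(f ∘ γ)''' = f_{,ijk} γ'^i γ'^j γ'^k = 0`. -/

section Contraction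

variable {ι R : Type*} [Fintype ι]

theorem sum_sum_sum_mul_eq_mul_quadratic [CommSemiring R] (a w : ι → R) (P : ι → ι → R) :
    ∑ i, ∑ j, ∑ k, a i * P j k * w i * w j * w k
      = (∑ i, a i * w i) * ∑ j, ∑ k, P j k * w j * w k := by
  rw [Fintype.sum_mul_sum]
  simp only [Finset.mul_sum]
  exact Finset.sum_congr rfl fun i _ => Finset.sum_congr rfl fun j _ =>
    Finset.sum_congr rfl fun k _ => by ring

theorem sum_sum_sum_mul_eq_mul_quadratic_of_middle [CommSemiring R] (a w : ι → R)
    (P : ι → ι → R) :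
    ∑ i, ∑ j, ∑ k, a j * P i k * w i * w j * w k
      = (∑ i, a i * w i) * ∑ j, ∑ k, P j k * w j * w k := by
  rw [Finset.sum_comm, ← sum_sum_sum_mul_eq_mul_quadratic]
  exact Finset.sum_congr rfl fun j _ => Finset.sum_congr rfl fun i _ =>
    Finset.sum_congr rfl fun k _ => by ring

theorem sum_sum_sum_mul_eq_mul_quadratic_of_last [CommSemiring R] (a w : ι → R)
    (P : ι → ι → R) :
    ∑ i, ∑ j, ∑ k, a k * P i j * w i * w j * w k
      = (∑ i, a i * w i) * ∑ j, ∑ k, P j k * w j * w k := by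
  calc ∑ i, ∑ j, ∑ k, a k * P i j * w i * w j * w k
      = ∑ i, ∑ k, ∑ j, a k * P i j * w i * w j * w k :=
        Finset.sum_congr rfl fun i _ => Finset.sum_comm
    _ = ∑ k, ∑ i, ∑ j, a k * P i j * w i * w j * w k := Finset.sum_comm
    _ = _ := by
      rw [← sum_sum_sum_mul_eq_mul_quadratic]
      exact Finset.sum_congr rfl fun k _ => Finset.sum_congr rfl fun i _ =>
        Finset.sum_congr rfl fun j _ => by ring

theorem sum_sum_mul_mul_eq_zero_of_antisymm [CommRing R] [NoZeroDivisors R] [CharZero R]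
    {P : ι → ι → R} (hP : ∀ i j, P i j = -P j i) (w : ι → R) :
    ∑ i, ∑ j, P i j * w i * w j = 0 := by
  rw [← CharZero.eq_neg_self_iff]
  calc ∑ i, ∑ j, P i j * w i * w j = ∑ j, ∑ i, P i j * w i * w j := Finset.sum_comm
    _ = -∑ i, ∑ j, P i j * w i * w j := by
      simp only [← Finset.sum_neg_distrib]
      exact Finset.sum_congr rfl fun j _ => Finset.sum_congr rfl fun i _ => by
        rw [hP]; ring

end Contraction

open scoped Matrix

namespace KahlerSetting

variable {n : ℕ} (S : KahlerSetting n)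

theorem Jl_antisymm (x : S.M) (i j : Fin (2*n)) : S.Jl x i j = -S.Jl x j i := by
  set G : Matrix (Fin (2*n)) (Fin (2*n)) ℝ := Matrix.of (S.g x)
  set Jm : Matrix (Fin (2*n)) (Fin (2*n)) ℝ := Matrix.of (S.J x)
  have hherm : Jmᵀ * G * Jm = G := by
    ext a b
    simp only [G, Jm, Matrix.mul_apply, Matrix.transpose_apply, Matrix.of_apply, Finset.sum_mul]
    rw [Finset.sum_comm, ← S.J_herm x a b]
    exact Finset.sum_congr rfl fun k _ => Finset.sum_congr rfl fun l _ => by ring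
  have hsq : Jm * Jm = -1 := by
    ext a b
    simp [Jm, Matrix.mul_apply, S.J_sq, Matrix.one_apply, apply_ite]
  have hskew : Jmᵀ * G = -(G * Jm) := by
    calc Jmᵀ * G = Jmᵀ * G * -(Jm * Jm) := by rw [hsq, neg_neg, Matrix.mul_one]
      _ = -(Jmᵀ * G * Jm * Jm) := by rw [Matrix.mul_neg, Matrix.mul_assoc (Jmᵀ * G)]
      _ = -(G * Jm) := by rw [hherm]
  have := congrFun (congrFun hskew j) i
  simp only [G, Jm, Matrix.mul_apply, Matrix.transpose_apply, Matrix.of_apply,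
    Matrix.neg_apply] at this
  simp only [Jl, ← this]
  exact Finset.sum_congr rfl fun k _ => by rw [S.g_symm, mul_comm]

variable {S} in
theorem IsTannoSol.sum_T3_mul_eq_zero {c : ℝ} {f : S.M → ℝ} (hf : S.IsTannoSol c f) (x : S.M)
    {w : Fin (2*n) → ℝ} (hw : ∑ i, ∑ j, S.g x i j * w i * w j = 0) :
    ∑ i, ∑ j, ∑ k, S.T3 f x i j k * w i * w j * w k = 0 := by
  set F := S.D0 f x
  set Fb := S.fbar f x
  have hJ : ∑ i, ∑ j, S.Jl x i j * w i * w j = 0 :=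
    sum_sum_mul_mul_eq_zero_of_antisymm (S.Jl_antisymm x) w
  have expand : ∀ i j k, S.T3 f x i j k * w i * w j * w k =
      -c * (2 * (F k * S.g x i j * w i * w j * w k) + F i * S.g x j k * w i * w j * w k
        + F j * S.g x i k * w i * w j * w k - Fb i * S.Jl x j k * w i * w j * w k
        - Fb j * S.Jl x i k * w i * w j * w k) :=
    fun i j k => by linear_combination (w i * w j * w k) * hf x i j k
  simp only [expand, ← Finset.mul_sum, Finset.sum_add_distrib, Finset.sum_sub_distrib]
  simp only [sum_sum_sum_mul_eq_mul_quadratic, sum_sum_sum_mul_eq_mul_quadratic_of_middle,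
    sum_sum_sum_mul_eq_mul_quadratic_of_last, hw, hJ]
  ring

end KahlerSetting

theorem sub_eq_sub_of_hasDerivAt {u φ d : ℝ → ℝ} (hu : ∀ t, HasDerivAt u (d t) t)
    (hφ : ∀ t, HasDerivAt φ (d t) t) (t s : ℝ) : u t - φ t = u s - φ s :=
  is_const_of_deriv_eq_zero (fun t => ((hu t).sub (hφ t)).differentiableAt)
    (fun t => by simpa using ((hu t).sub (hφ t)).deriv) t s

theorem eq_quadratic_of_hasDerivAt {u u' u'' : ℝ → ℝ} (h1 : ∀ t, HasDerivAt u (u' t) t)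
    (h2 : ∀ t, HasDerivAt u' (u'' t) t) (h3 : ∀ t, HasDerivAt u'' 0 t) (t : ℝ) :
    u t = u'' 0 / 2 * t ^ 2 + u' 0 * t + u 0 := by
  have hu'' : ∀ s, u'' s = u'' 0 := fun s => by
    simpa using sub_eq_sub_of_hasDerivAt h3 (fun _ => hasDerivAt_const _ (0 : ℝ)) s 0
  have hu' : ∀ s, u' s = u'' 0 * s + u' 0 := fun s => by
    have hlin : ∀ t, HasDerivAt (fun s => u'' 0 * s) (u'' t) t := fun t => by
      simpa [hu'' t] using (hasDerivAt_id t).const_mul (u'' 0)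
    have := sub_eq_sub_of_hasDerivAt h2 hlin s 0
    simp only [mul_zero, sub_zero] at this
    linarith
  have hquad : ∀ t, HasDerivAt (fun s => u'' 0 / 2 * s ^ 2 + u' 0 * s) (u' t) t := fun t => by
    rw [hu' t]
    refine (((hasDerivAt_pow 2 t).const_mul (u'' 0 / 2)).add
      ((hasDerivAt_id t).const_mul (u' 0))).congr_deriv ?_
    norm_num
    ring
  have := sub_eq_sub_of_hasDerivAt h1 hquad t 0
  norm_num at this
  linarith

/-- Along a complete lightlike geodesic `γ` (with velocity components `v`,
satisfying `g_{ij} v^i v^j = 0` and the chain rules coming from `∇_{γ'}γ' = 0`), a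
solution `f` of the Tanno equation satisfies `(f∘γ)''' = 0`, so `f∘γ` is a polynomial
of degree at most `2`. -/
theorem tanno_along_lightlike_geodesic {n : ℕ} (S : KahlerSetting n)
    (c : ℝ) (f : S.M → ℝ) (hf : S.IsTannoSol c f)
    (γ : ℝ → S.M) (v : ℝ → Fin (2*n) → ℝ)
    (hlight : ∀ t, ∑ i, ∑ j, S.g (γ t) i j * v t i * v t j = 0)
    (hchain1 : ∀ t, HasDerivAt (fun s => f (γ s)) (∑ i, S.D0 f (γ t) i * v t i) t)
    (hchain2 : ∀ t, HasDerivAt (fun s => ∑ i, S.D0 f (γ s) i * v s i)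
        (∑ i, ∑ j, S.Hess f (γ t) i j * v t i * v t j) t)
    (hchain3 : ∀ t, HasDerivAt (fun s => ∑ i, ∑ j, S.Hess f (γ s) i j * v s i * v s j)
        (∑ i, ∑ j, ∑ k, S.T3 f (γ t) i j k * v t i * v t j * v t k) t) :
    (∀ t, deriv (deriv (deriv (fun s => f (γ s)))) t = 0) ∧
    ∃ A B C : ℝ, ∀ t, f (γ t) = A * t^2 + B * t + C := by
  have hthird : ∀ t, HasDerivAt (fun s => ∑ i, ∑ j, S.Hess f (γ s) i j * v s i * v s j) 0 t :=
    fun t => hf.sum_T3_mul_eq_zero (γ t) (hlight t) ▸ hchain3 t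
  refine ⟨fun t => ?_, _, _, _, eq_quadratic_of_hasDerivAt hchain1 hchain2 hthird⟩
  rw [funext fun s => (hchain1 s).deriv, funext fun s => (hchain2 s).deriv]
  exact (hthird t).deriv
end
end

section
/- Let A be an endomorphism of a finite-dimensional real vector space having at least two distinct real eigenvalues. Then there exists a real polynomial P such that P(A) is a nontrivial projector, i.e. P(A)² = P(A), P(A) ≠ 0, and P(A) ≠ Id. -/
/-!
Split the minimal polynomial as `μ = (X - a)^m * q` with `X - a ∤ q`. The two factors are
coprime, so `u (X - a)^m + v q = 1` for some `u, v`, and `e = v q` is an idempotent modulo `μ`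
(the Chinese remainder idempotent). Hence `e(A)` is a projector; it acts as `e(a) = 1` on an
`a`-eigenvector and as `e(b) = 0` on a `b`-eigenvector, since `b` is a root of `q`.
-/

open Polynomial Module.End

namespace Polynomial

variable {K : Type*} [Field K]

theorem mul_dvd_mul_self_sub_of_add_eq_one {p q u v : K[X]} (h : u * p + v * q = 1) :
    p * q ∣ v * q * (v * q) - v * q :=
  ⟨-(u * v), by linear_combination (v * q) * h⟩

theorem exists_dvd_mul_self_sub_and_eval_eq_one_and_eval_eq_zero {μ : K[X]} (hμ : μ ≠ 0)
    {a b : K} (hab : a ≠ b) (ha : μ.IsRoot a) (hb : μ.IsRoot b) :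
    ∃ e : K[X], μ ∣ e * e - e ∧ e.eval a = 1 ∧ e.eval b = 0 := by
  obtain ⟨q, hμq, ha_ndvd⟩ := μ.exists_eq_pow_rootMultiplicity_mul_and_not_dvd hμ a
  set m := μ.rootMultiplicity a
  have hm : m ≠ 0 := ((rootMultiplicity_pos hμ).2 ha).ne'
  obtain ⟨u, v, huv⟩ : IsCoprime ((X - C a) ^ m) q :=
    ((irreducible_X_sub_C a).coprime_iff_not_dvd.2 ha_ndvd).pow_left
  have hqb : q.eval b = 0 := by
    have hμb : (b - a) ^ m * q.eval b = 0 := by simpa [hμq] using hb.eq_zero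
    exact (mul_eq_zero.1 hμb).resolve_left (pow_ne_zero _ (sub_ne_zero.2 hab.symm))
  refine ⟨v * q, hμq ▸ mul_dvd_mul_self_sub_of_add_eq_one huv, ?_, by simp [hqb]⟩
  simpa [zero_pow hm] using congrArg (eval a) huv

end Polynomial

theorem Module.End.HasEigenvalue.eval_eq_of_aeval_eq_algebraMap {K V : Type*} [Field K]
    [AddCommGroup V] [Module K V] {f : End K V} {a c : K} (ha : f.HasEigenvalue a) {P : K[X]}
    (hP : aeval f P = algebraMap K (End K V) c) : P.eval a = c := by
  obtain ⟨x, hx⟩ := ha.exists_hasEigenvector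
  have hx' : P.eval a • x = c • x := by
    rw [← aeval_apply_of_hasEigenvector hx, hP, algebraMap_end_apply]
  exact smul_left_injective K hx.2 hx'

/-- An endomorphism of a finite-dimensional real vector space with at
least two distinct real eigenvalues admits a real polynomial `P` such that `P(A)` is a
nontrivial projector. -/
theorem exists_polynomial_projector {V : Type*} [AddCommGroup V] [Module ℝ V]
    [FiniteDimensional ℝ V] (A : V →ₗ[ℝ] V) (a b : ℝ) (hab : a ≠ b)
    (ha : Module.End.HasEigenvalue A a) (hb : Module.End.HasEigenvalue A b) :
    ∃ P : Polynomial ℝ,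
      (Polynomial.aeval A P) ∘ₗ (Polynomial.aeval A P) = Polynomial.aeval A P ∧
      Polynomial.aeval A P ≠ 0 ∧ Polynomial.aeval A P ≠ LinearMap.id := by
  obtain ⟨e, ⟨c, hc⟩, hea, heb⟩ :=
    exists_dvd_mul_self_sub_and_eval_eq_one_and_eval_eq_zero
      (minpoly.ne_zero (Algebra.IsIntegral.isIntegral A)) hab
      (isRoot_of_hasEigenvalue ha) (isRoot_of_hasEigenvalue hb)
  refine ⟨e, ?_, fun h0 => ?_, fun h1 => ?_⟩
  · have h : aeval A (e * e - e) = 0 := by rw [hc, map_mul, minpoly.aeval, zero_mul]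
    rwa [map_sub, sub_eq_zero, map_mul] at h
  · exact one_ne_zero <| hea.symm.trans <|
      ha.eval_eq_of_aeval_eq_algebraMap (h0.trans (map_zero _).symm)
  · exact zero_ne_one <| heb.symm.trans <|
      hb.eval_eq_of_aeval_eq_algebraMap (h1.trans (map_one _).symm)
end

section
/- Let f be a solution with L(f) a nontrivial projector, (a_{ij}, f_i, μ) the associated data, and p a point with 0 < μ(p) < 1. Then at p the endomorphism a^i_j has exactly the eigenvalues 1, 0, and 1−μ(p), with eigenspaces: E_1 = E_{L(f)}(1) ∩ T_pM of dimension 2k, E_0 = E_{L(f)}(0) ∩ T_pM of dimension 2n−2k−2, and E_{1−μ} = span{f^i, f̄^i} of dimension 2; moreover T_pM = E_1 ⊕ E_0 ⊕ E_{1−μ}. -/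
open scoped BigOperators

noncomputable section

/-!
Write `L(f)` at `p` in block form `[[μ, B], [C, A]]` with respect to `ℝ² ⊕ T_pM`, where
`A = a^i_j`, the rows of `B` are `f_i, f̄_i` and the columns of `C` are `f^i, f̄^i`. For an
eigenvector `v` of `A` with eigenvalue `t`, idempotency of `L(f)` gives `t (1 - t) v = C (B v)`:
eigenvectors for `t ∉ {0, 1}` lie in the range of `C`, which is the `(1 - μ)`-eigenspace, while
`B` kills the `0`- and `1`-eigenspaces. Since `BC = μ (1 - μ)` is invertible,
`T_pM = ker B ⊕ range C`, and `A` is idempotent on `ker B`. Finally `E_{L(f)}(1)` is `E₁` plus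
the graph of `w ↦ μ⁻¹ C w` over `ℝ²`, which gives `dim E₁ = 2k`.
-/

open Module Module.End Submodule

theorem Submodule.finrank_eq_finrank_comap_add_finrank {K U V W : Type*} [Field K]
    [AddCommGroup U] [Module K U] [AddCommGroup V] [Module K V] [AddCommGroup W] [Module K W]
    [FiniteDimensional K U] {π : U →ₗ[K] W} {e : V →ₗ[K] U} {s : W →ₗ[K] U}
    (he : Function.Injective e) (hker : LinearMap.ker π = LinearMap.range e)
    (hs : ∀ w, π (s w) = w) {U' : Submodule K U} (hsU' : LinearMap.range s ≤ U') :
    finrank K U' = finrank K (U'.comap e) + finrank K W := by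
  have hsup : (U'.comap e).map e ⊔ LinearMap.range s = U' := by
    rw [Submodule.map_comap_eq]
    refine le_antisymm (sup_le inf_le_right hsU') fun u hu => ?_
    have hu' : u - s (π u) ∈ LinearMap.range e := by
      rw [← hker, LinearMap.mem_ker, map_sub, hs, sub_self]
    rw [← sub_add_cancel u (s (π u))]
    exact add_mem_sup ⟨hu', U'.sub_mem hu (hsU' ⟨_, rfl⟩)⟩ ⟨_, rfl⟩
  have hinf : (U'.comap e).map e ⊓ LinearMap.range s = ⊥ := by
    refine (Submodule.disjoint_def.mpr ?_).eq_bot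
    rintro _ ⟨v, -, rfl⟩ ⟨w, hw⟩
    have hπ : π (e v) = 0 := by rw [← LinearMap.mem_ker, hker]; exact ⟨v, rfl⟩
    rw [← hw, hs] at hπ
    rw [← hw, hπ, map_zero]
  have key := Submodule.finrank_sup_add_finrank_inf_eq ((U'.comap e).map e) (LinearMap.range s)
  rwa [hsup, hinf, finrank_bot, add_zero, ← (Submodule.equivMapOfInjective e he _).finrank_eq,
    LinearMap.finrank_range_of_inj (Function.LeftInverse.injective hs)] at key

/-- The block identities of `L² = L` for `L = [[μ • 1, B], [C, A]]` acting on `W × V`. -/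
structure IdempotentBlocks {K V W : Type*} [Field K] [AddCommGroup V] [Module K V]
    [AddCommGroup W] [Module K W]
    (μ : K) (A : Module.End K V) (B : V →ₗ[K] W) (C : W →ₗ[K] V) : Prop where
  BC : ∀ w, B (C w) = (μ * (1 - μ)) • w
  BA : ∀ v, B (A v) = (1 - μ) • B v
  AC : ∀ w, A (C w) = (1 - μ) • C w
  AA : ∀ v, A (A v) = A v - C (B v)

namespace IdempotentBlocks

variable {K V W : Type*} [Field K] [AddCommGroup V] [Module K V] [AddCommGroup W] [Module K W]
  {μ : K} {A : Module.End K V} {B : V →ₗ[K] W} {C : W →ₗ[K] V}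

theorem sub_mul_smul_eq_of_mem_eigenspace (h : IdempotentBlocks μ A B C) {t : K} {v : V}
    (hv : v ∈ eigenspace A t) : (t - t * t) • v = C (B v) := by
  rw [mem_eigenspace_iff] at hv
  have hAA := h.AA v
  rw [hv, map_smul, hv, smul_smul] at hAA
  rw [sub_smul, hAA]
  abel

theorem B_eq_zero_of_mem_eigenspace (h : IdempotentBlocks μ A B C) {t : K} (ht : t ≠ 1 - μ)
    {v : V} (hv : v ∈ eigenspace A t) : B v = 0 := by
  have hBA := h.BA v
  rw [mem_eigenspace_iff.mp hv, map_smul, ← sub_eq_zero, ← sub_smul] at hBA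
  exact (smul_eq_zero.mp hBA).resolve_left (sub_ne_zero.mpr ht)

theorem range_le_eigenspace (h : IdempotentBlocks μ A B C) :
    LinearMap.range C ≤ eigenspace A (1 - μ) := by
  rintro _ ⟨w, rfl⟩
  exact mem_eigenspace_iff.mpr (h.AC w)

theorem mem_range_of_mem_eigenspace (h : IdempotentBlocks μ A B C) {t : K} (ht : t - t * t ≠ 0)
    {v : V} (hv : v ∈ eigenspace A t) : v ∈ LinearMap.range C :=
  ⟨(t - t * t)⁻¹ • B v, by
    rw [map_smul, ← h.sub_mul_smul_eq_of_mem_eigenspace hv, inv_smul_smul₀ ht]⟩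

theorem injective_C (h : IdempotentBlocks μ A B C) (hμ : μ * (1 - μ) ≠ 0) :
    Function.Injective C := fun w w' hww' => by
  simpa [h.BC, smul_right_inj hμ] using congrArg B hww'

theorem eigenspace_one_sub_eq_range (h : IdempotentBlocks μ A B C) (hμ : μ * (1 - μ) ≠ 0) :
    eigenspace A (1 - μ) = LinearMap.range C :=
  le_antisymm
    (fun _ hv => h.mem_range_of_mem_eigenspace (by rwa [show (1 - μ) - (1 - μ) * (1 - μ)
      = μ * (1 - μ) by ring]) hv)
    h.range_le_eigenspace

theorem eq_of_hasEigenvalue (h : IdempotentBlocks μ A B C) {t : K}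
    (ht : HasEigenvalue A t) : t = 1 ∨ t = 0 ∨ t = 1 - μ := by
  by_contra! hne
  obtain ⟨v, hv⟩ := ht.exists_hasEigenvector
  have htt : t - t * t ≠ 0 := by
    rw [show t - t * t = t * (1 - t) by ring]
    exact mul_ne_zero hne.2.1 (sub_ne_zero.mpr hne.1.symm)
  have hv' := mem_eigenspace_iff.mp
    (h.range_le_eigenspace (h.mem_range_of_mem_eigenspace htt hv.1))
  rw [hv.apply_eq_smul, ← sub_eq_zero, ← sub_smul] at hv'
  exact hne.2.2 (sub_eq_zero.mp ((smul_eq_zero.mp hv').resolve_right hv.2))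

theorem eigenspace_one_sup_eigenspace_zero_le_ker (h : IdempotentBlocks μ A B C)
    (hμ : μ * (1 - μ) ≠ 0) : eigenspace A 1 ⊔ eigenspace A 0 ≤ LinearMap.ker B :=
  sup_le
    (fun _ hv => h.B_eq_zero_of_mem_eigenspace
      (fun h1 => left_ne_zero_of_mul hμ (by linear_combination h1)) hv)
    (fun _ hv => h.B_eq_zero_of_mem_eigenspace (right_ne_zero_of_mul hμ).symm hv)

theorem disjoint_ker_range (h : IdempotentBlocks μ A B C) (hμ : μ * (1 - μ) ≠ 0) :
    Disjoint (LinearMap.ker B) (LinearMap.range C) := by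
  rw [Submodule.disjoint_def]
  rintro _ hB ⟨w, rfl⟩
  rw [LinearMap.mem_ker, h.BC, smul_eq_zero] at hB
  rw [hB.resolve_left hμ, map_zero]

theorem eigenspace_sup_eq_top (h : IdempotentBlocks μ A B C) (hμ : μ * (1 - μ) ≠ 0) :
    eigenspace A 1 ⊔ eigenspace A 0 ⊔ eigenspace A (1 - μ) = ⊤ := by
  refine eq_top_iff.mpr fun v _ => ?_
  -- `w` is the component of `v` in `ker B`, on which `A` is idempotent.
  set w := v - C ((μ * (1 - μ))⁻¹ • B v)
  have hw : B w = 0 := by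
    rw [map_sub, h.BC, smul_smul, mul_inv_cancel₀ hμ, one_smul, sub_self]
  have hAw : A w ∈ eigenspace A 1 := by
    rw [mem_eigenspace_iff, one_smul, h.AA, hw, map_zero, sub_zero]
  have hw' : w - A w ∈ eigenspace A 0 := by
    rw [mem_eigenspace_iff, zero_smul, map_sub, h.AA, hw, map_zero, sub_zero, sub_self]
  have hC : C ((μ * (1 - μ))⁻¹ • B v) ∈ eigenspace A (1 - μ) :=
    h.range_le_eigenspace ⟨_, rfl⟩
  have hv : v = A w + (w - A w) + C ((μ * (1 - μ))⁻¹ • B v) := by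
    rw [add_sub_cancel, sub_add_cancel]
  rw [hv]
  exact add_mem_sup (add_mem_sup hAw hw') hC

theorem finrank_eigenspace_add_finrank_eigenspace_add_finrank [FiniteDimensional K V]
    [FiniteDimensional K W] (h : IdempotentBlocks μ A B C) (hμ : μ * (1 - μ) ≠ 0) :
    finrank K (eigenspace A 1) + finrank K (eigenspace A 0) + finrank K W = finrank K V := by
  have h10 : Disjoint (eigenspace A 1) (eigenspace A 0) :=
    A.disjoint_genEigenspace one_ne_zero 1 1
  have hcompl : IsCompl (eigenspace A 1 ⊔ eigenspace A 0) (eigenspace A (1 - μ)) := by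
    refine ⟨?_, codisjoint_iff.mpr (h.eigenspace_sup_eq_top hμ)⟩
    rw [h.eigenspace_one_sub_eq_range hμ]
    exact (h.disjoint_ker_range hμ).mono_left (h.eigenspace_one_sup_eigenspace_zero_le_ker hμ)
  rw [← Submodule.finrank_add_eq_of_isCompl hcompl, h.eigenspace_one_sub_eq_range hμ,
    LinearMap.finrank_range_of_inj (h.injective_C hμ),
    ← Submodule.finrank_sup_add_finrank_inf_eq, h10.eq_bot, finrank_bot, add_zero]

end IdempotentBlocks

namespace Matrix

variable {K : Type*} [Field K] {l m : Type*} [Fintype l] [Fintype m] [DecidableEq l]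
  [DecidableEq m] {μ : K} {A : Matrix m m K} {B : Matrix l m K} {C : Matrix m l K}

theorem idempotentBlocks_toLin'
    (hL : fromBlocks (μ • 1) B C A * fromBlocks (μ • 1) B C A = fromBlocks (μ • 1) B C A) :
    IdempotentBlocks μ (toLin' A) (toLin' B) (toLin' C) := by
  rw [fromBlocks_multiply, fromBlocks_inj] at hL
  obtain ⟨hBC, hBA, hAC, hAA⟩ := hL
  refine ⟨fun w => ?_, fun v => ?_, fun w => ?_, fun v => ?_⟩ <;>
    simp only [toLin'_apply, mulVec_mulVec]
  · rw [eq_sub_of_add_eq' hBC]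
    simp [sub_mulVec, smul_mulVec, smul_smul, mul_sub, sub_smul]
  · rw [eq_sub_of_add_eq' hBA]
    simp [sub_mulVec, smul_mulVec, sub_smul]
  · rw [eq_sub_of_add_eq' hAC]
    simp [sub_mulVec, smul_mulVec, sub_smul]
  · rw [eq_sub_of_add_eq' hAA, sub_mulVec]

end Matrix

theorem tangentEmb_injective (n : ℕ) : Function.Injective (tangentEmb n) :=
  fun _ _ h => funext fun i => congrFun h (Sum.inr i)

theorem range_tangentEmb (n : ℕ) :
    LinearMap.range (tangentEmb n) = LinearMap.ker (LinearMap.funLeft ℝ ℝ Sum.inl) := by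
  refine le_antisymm (by rintro _ ⟨v, rfl⟩; rfl) fun u hu => ⟨u ∘ Sum.inr, ?_⟩
  ext (i | i)
  · exact (congrFun hu i).symm
  · rfl

namespace Matrix

variable {n : ℕ} {μ : ℝ} {A : Matrix (Fin (2*n)) (Fin (2*n)) ℝ}
  {B : Matrix (Fin 2) (Fin (2*n)) ℝ} {C : Matrix (Fin (2*n)) (Fin 2) ℝ}

theorem toLin'_fromBlocks_tangentEmb (v : Fin (2*n) → ℝ) :
    toLin' (fromBlocks (μ • 1) B C A) (tangentEmb n v) = Sum.elim (B *ᵥ v) (A *ᵥ v) := by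
  rw [toLin'_apply, fromBlocks_mulVec]
  have h0 : tangentEmb n v ∘ Sum.inl = 0 := rfl
  have hv : tangentEmb n v ∘ Sum.inr = v := rfl
  rw [h0, hv, mulVec_zero, mulVec_zero, zero_add, zero_add]

theorem tangentEmb_mem_eigenspace_iff {t : ℝ} {v : Fin (2*n) → ℝ} :
    tangentEmb n v ∈ eigenspace (toLin' (fromBlocks (μ • 1) B C A)) t ↔
      B *ᵥ v = 0 ∧ v ∈ eigenspace (toLin' A) t := by
  rw [mem_eigenspace_iff, mem_eigenspace_iff, toLin'_fromBlocks_tangentEmb, toLin'_apply,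
    ← map_smul]
  exact ⟨fun h => ⟨congrArg (· ∘ Sum.inl) h, congrArg (· ∘ Sum.inr) h⟩,
    fun ⟨hB, hA⟩ => by rw [hB, hA]; rfl⟩

theorem comap_tangentEmb_eigenspace (h : IdempotentBlocks μ (toLin' A) (toLin' B) (toLin' C))
    {t : ℝ} (ht : t ≠ 1 - μ) :
    (eigenspace (toLin' (fromBlocks (μ • 1) B C A)) t).comap (tangentEmb n) =
      eigenspace (toLin' A) t := by
  ext v
  rw [mem_comap, tangentEmb_mem_eigenspace_iff]
  exact ⟨And.right, fun hv => ⟨h.B_eq_zero_of_mem_eigenspace ht hv, hv⟩⟩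

theorem finrank_eigenspace_fromBlocks_one
    (h : IdempotentBlocks μ (toLin' A) (toLin' B) (toLin' C)) (hμ : μ ≠ 0) :
    finrank ℝ (eigenspace (toLin' (fromBlocks (μ • 1) B C A)) 1) =
      finrank ℝ (eigenspace (toLin' A) 1) + 2 := by
  -- `w ↦ (w, μ⁻¹ C w)` is a section of `T M̂ → ℝ²` with values in the `1`-eigenspace.
  let s : (Fin 2 → ℝ) →ₗ[ℝ] (Fin 2 ⊕ Fin (2*n) → ℝ) :=
    (LinearEquiv.sumArrowLequivProdArrow _ _ ℝ ℝ).symm.toLinearMap ∘ₗ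
      LinearMap.id.prod (μ⁻¹ • toLin' C)
  have hs : LinearMap.range s ≤ eigenspace (toLin' (fromBlocks (μ • 1) B C A)) 1 := by
    rintro _ ⟨w, rfl⟩
    have hBC := h.BC w
    have hAC := h.AC w
    rw [toLin'_apply, toLin'_apply] at hBC hAC
    rw [mem_eigenspace_iff, one_smul, toLin'_apply, fromBlocks_mulVec]
    change Sum.elim _ _ = Sum.elim w (μ⁻¹ • C *ᵥ w)
    congr 1
    · change (μ • 1 : Matrix _ _ ℝ) *ᵥ w + B *ᵥ (μ⁻¹ • C *ᵥ w) = w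
      rw [mulVec_smul, hBC, smul_mulVec, one_mulVec, smul_smul]
      match_scalars
      field_simp
      ring
    · change C *ᵥ w + A *ᵥ (μ⁻¹ • C *ᵥ w) = μ⁻¹ • C *ᵥ w
      rw [mulVec_smul, hAC, smul_smul]
      match_scalars
      field_simp
      ring
  rw [Submodule.finrank_eq_finrank_comap_add_finrank (tangentEmb_injective n)
    (range_tangentEmb n).symm (fun _ => rfl) hs,
    comap_tangentEmb_eigenspace h fun h1 => hμ (by linear_combination h1), finrank_fin_fun]

end Matrix

theorem KahlerSetting.Lmat_eq_fromBlocks {n : ℕ} (S : KahlerSetting n) (f : S.M → ℝ)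
    (x : S.M) : S.Lmat f x = Matrix.fromBlocks (S.muF f x • 1)
      (Matrix.of fun i j => if i = (0 : Fin 2) then S.D0 f x j else S.fbar f x j)
      (Matrix.of fun i j => if j = (0 : Fin 2) then S.raise1 x (S.D0 f x) i
        else S.raise1 x (S.fbar f x) i)
      (Matrix.of fun i j => S.aUp f x i j) := by
  rw [KahlerSetting.Lmat]
  congr 1
  ext i j
  simp [Matrix.one_apply]

theorem eigenstructure_of_a_general {n : ℕ} (S : KahlerSetting n) (f : S.M → ℝ)
    (hproj : ∀ q : S.Mhat, S.Lhat f q * S.Lhat f q = S.Lhat f q)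
    (p : S.M) (hμ0 : 0 < S.muF f p) (hμ1 : S.muF f p < 1)
    (k : ℕ)
    (hk : Module.finrank ℝ (Module.End.eigenspace (S.LEnd f p) 1) = 2*k + 2) :
    (∀ t : ℝ, Module.End.HasEigenvalue (S.aEnd f p) t →
        t = 1 ∨ t = 0 ∨ t = 1 - S.muF f p) ∧
    Module.End.eigenspace (S.aEnd f p) 1
      = Submodule.comap (tangentEmb n) (Module.End.eigenspace (S.LEnd f p) 1) ∧
    Module.End.eigenspace (S.aEnd f p) 0
      = Submodule.comap (tangentEmb n) (Module.End.eigenspace (S.LEnd f p) 0) ∧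
    Module.finrank ℝ (Module.End.eigenspace (S.aEnd f p) 1) = 2*k ∧
    Module.finrank ℝ (Module.End.eigenspace (S.aEnd f p) 0) = 2*n - 2*k - 2 ∧
    Module.End.eigenspace (S.aEnd f p) (1 - S.muF f p)
      = Submodule.span ℝ
          ({S.raise1 p (S.D0 f p), S.raise1 p (S.fbar f p)} : Set (Fin (2*n) → ℝ)) ∧
    Module.finrank ℝ (Module.End.eigenspace (S.aEnd f p) (1 - S.muF f p)) = 2 ∧
    Module.End.eigenspace (S.aEnd f p) 1 ⊔ Module.End.eigenspace (S.aEnd f p) 0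
        ⊔ Module.End.eigenspace (S.aEnd f p) (1 - S.muF f p) = ⊤ := by
  have hL := S.Lmat_eq_fromBlocks f p
  have h := Matrix.idempotentBlocks_toLin' (by rw [← hL]; exact hproj ((0, 0), p))
  have hμ : S.muF f p * (1 - S.muF f p) ≠ 0 := by nlinarith
  unfold KahlerSetting.aEnd KahlerSetting.LEnd at *
  rw [hL, Matrix.finrank_eigenspace_fromBlocks_one h hμ0.ne'] at hk
  have hcount := h.finrank_eigenspace_add_finrank_eigenspace_add_finrank hμ
  rw [finrank_fin_fun, finrank_fin_fun] at hcount
  have hspan : eigenspace (Matrix.toLin' (Matrix.of fun i j => S.aUp f p i j)) (1 - S.muF f p)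
      = span ℝ {S.raise1 p (S.D0 f p), S.raise1 p (S.fbar f p)} := by
    rw [h.eigenspace_one_sub_eq_range hμ, Matrix.range_toLin']
    congr 1
    ext v
    simp only [Set.mem_range, Fin.exists_fin_two, Set.mem_insert_iff, Set.mem_singleton_iff,
      eq_comm]
    rfl
  rw [hL, Matrix.comap_tangentEmb_eigenspace h (by linarith),
    Matrix.comap_tangentEmb_eigenspace h (by linarith), hspan]
  refine ⟨fun t ht => h.eq_of_hasEigenvalue ht, rfl, rfl, by omega, by omega, rfl, ?_,
    hspan ▸ h.eigenspace_sup_eq_top hμ⟩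
  rw [← hspan, h.eigenspace_one_sub_eq_range hμ,
    LinearMap.finrank_range_of_inj (h.injective_C hμ), finrank_fin_fun]

/-- If `L(f)` is a nontrivial projector, `(a_{ij}, f_i, μ)` the associated
data, and `p` a point with `0 < μ(p) < 1`, then `a^i_j` at `p` has exactly the
eigenvalues `1`, `0` and `1 - μ(p)`, with eigenspaces `E₁ = E_{L(f)}(1) ∩ T_pM` of
dimension `2k`, `E₀ = E_{L(f)}(0) ∩ T_pM` of dimension `2n - 2k - 2`, and
`E_{1-μ} = span{f^i, f̄^i}` of dimension `2`; moreover `T_pM = E₁ ⊕ E₀ ⊕ E_{1-μ}`. -/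
theorem eigenstructure_of_a {n : ℕ} (S : KahlerSetting n) (f : S.M → ℝ)
    (hf : S.IsTannoSol 1 f)
    (hproj : ∀ q : S.Mhat, S.Lhat f q * S.Lhat f q = S.Lhat f q)
    (h0 : ∃ q : S.Mhat, S.Lhat f q ≠ 0) (h1 : ∃ q : S.Mhat, S.Lhat f q ≠ 1)
    (p : S.M) (hμ0 : 0 < S.muF f p) (hμ1 : S.muF f p < 1)
    (k : ℕ)
    (hk : Module.finrank ℝ (Module.End.eigenspace (S.LEnd f p) 1) = 2*k + 2) :
    (∀ t : ℝ, Module.End.HasEigenvalue (S.aEnd f p) t →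
        t = 1 ∨ t = 0 ∨ t = 1 - S.muF f p) ∧
    Module.End.eigenspace (S.aEnd f p) 1
      = Submodule.comap (tangentEmb n) (Module.End.eigenspace (S.LEnd f p) 1) ∧
    Module.End.eigenspace (S.aEnd f p) 0
      = Submodule.comap (tangentEmb n) (Module.End.eigenspace (S.LEnd f p) 0) ∧
    Module.finrank ℝ (Module.End.eigenspace (S.aEnd f p) 1) = 2*k ∧
    Module.finrank ℝ (Module.End.eigenspace (S.aEnd f p) 0) = 2*n - 2*k - 2 ∧
    Module.End.eigenspace (S.aEnd f p) (1 - S.muF f p)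
      = Submodule.span ℝ
          ({S.raise1 p (S.D0 f p), S.raise1 p (S.fbar f p)} : Set (Fin (2*n) → ℝ)) ∧
    Module.finrank ℝ (Module.End.eigenspace (S.aEnd f p) (1 - S.muF f p)) = 2 ∧
    Module.End.eigenspace (S.aEnd f p) 1 ⊔ Module.End.eigenspace (S.aEnd f p) 0
        ⊔ Module.End.eigenspace (S.aEnd f p) (1 - S.muF f p) = ⊤ :=
  eigenstructure_of_a_general S f hproj p hμ0 hμ1 k hk
end
end
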